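/- Every nonempty perfect matching diagram π is •-primitive: there do not exist nonempty partition diagrams ρ⁽¹⁾ and ρ⁽²⁾ with π = ρ⁽¹⁾ • ρ⁽²⁾. -/

import Mathlib

open Finset

/-- A partition diagram of order `k`: a set partition (equivalence relation) on the
`2k`-element set `Fin k × Bool`, where `(i, true)` denotes the top node `i+1` and
`(i, false)` denotes the bottom node `(i+1)'`. -/
abbrev DiagramOn (k : ℕ) := Setoid (Fin k × Bool)

/-- A partition diagram of arbitrary order. -/
abbrev Diagram := Σ k : ℕ, DiagramOn k

/-- The disjoint sum of two set partitions. -/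
def sumSetoid {α β : Type*} (s : Setoid α) (t : Setoid β) : Setoid (α ⊕ β) where
  r x y :=
    match x, y with
    | .inl a, .inl b => s.r a b
    | .inr a, .inr b => t.r a b
    | _, _ => False
  iseqv := by
    refine ⟨?_, ?_, ?_⟩
    · rintro (a | a)
      · exact s.iseqv.refl a
      · exact t.iseqv.refl a
    · rintro (a | a) (b | b) h
      · exact s.iseqv.symm h
      · exact h.elim
      · exact h.elim
      · exact t.iseqv.symm h
    · rintro (a | a) (b | b) (c | c) h₁ h₂ <;>
        first
          | exact s.iseqv.trans h₁ h₂
          | exact t.iseqv.trans h₁ h₂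
          | exact h₁.elim
          | exact h₂.elim

/-- The relabeling identifying the nodes of two concatenated diagrams of orders `j`, `m`
with the nodes of a diagram of order `j + m`. -/
def concatEquiv (j m : ℕ) : (Fin j × Bool) ⊕ (Fin m × Bool) ≃ Fin (j + m) × Bool :=
  (Equiv.sumProdDistrib (Fin j) (Fin m) Bool).symm.trans
    (Equiv.prodCongr finSumFinEquiv (Equiv.refl Bool))

/-- Horizontal concatenation of partition diagrams. -/
def concatOn {j m : ℕ} (s : DiagramOn j) (t : DiagramOn m) : DiagramOn (j + m) :=
  Setoid.comap (concatEquiv j m).symm (sumSetoid s t)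

/-- Horizontal concatenation `⊗` of diagrams of arbitrary orders. -/
def Diagram.concat (d₁ d₂ : Diagram) : Diagram :=
  ⟨d₁.1 + d₂.1, concatOn d₁.2 d₂.2⟩

/-- A nonempty diagram is `⊗`-irreducible if it is not the concatenation of two
nonempty diagrams. -/
def Diagram.Irr (d : Diagram) : Prop :=
  d.1 ≠ 0 ∧ ¬ ∃ d₁ d₂ : Diagram, d₁.1 ≠ 0 ∧ d₂.1 ≠ 0 ∧ d = d₁.concat d₂

/-- The Bell number: the number of set partitions of an `m`-element set. -/
noncomputable def bell (m : ℕ) : ℕ := Nat.card (Setoid (Fin m))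

/-- The smallest equivalence relation containing `s` and relating `a` with `b`
(merging the blocks of `a` and `b`). -/
def joinTwo {X : Type*} (s : Setoid X) (a b : X) : Setoid X :=
  s ⊔ Relation.EqvGen.setoid (fun x y => x = a ∧ y = b)

/-- The near-concatenation `•` of partition diagrams: concatenate, then merge the block
of the bottom-right node of the first diagram with the block of the bottom-left node of
the second diagram.  By convention `∅ • ρ = ρ` and `π • ∅ = π`. -/
def Diagram.bullet (d₁ d₂ : Diagram) : Diagram :=
  if h₁ : d₁.1 = 0 then d₂
  else if h₂ : d₂.1 = 0 then d₁
  else ⟨d₁.1 + d₂.1,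
    joinTwo (concatOn d₁.2 d₂.2)
      (⟨d₁.1 - 1, by omega⟩, false) (⟨d₁.1, by omega⟩, false)⟩

/-- The `⊗`-product of a list of diagrams (empty diagram for the empty list). -/
def Diagram.listConcat : List Diagram → Diagram
  | [] => ⟨0, ⊥⟩
  | d :: l => l.foldl Diagram.concat d

/-- The `•`-product of a list of diagrams (empty diagram for the empty list). -/
def Diagram.listBullet : List Diagram → Diagram
  | [] => ⟨0, ⊥⟩
  | d :: l => l.foldl Diagram.bullet d

/-- The number of `⊗`-irreducible partition diagrams of order `k`. -/
noncomputable def irrCount (k : ℕ) : ℕ := Nat.card {s : DiagramOn k // Diagram.Irr ⟨k, s⟩}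

/-- A perfect matching: a partition diagram in which every block has size exactly two. -/
def IsPerfectMatching {k : ℕ} (s : DiagramOn k) : Prop :=
  ∀ x : Fin k × Bool, ({y | s.r x y} : Set (Fin k × Bool)).ncard = 2

/-!
In `ρ₁ • ρ₂` the last bottom node `a` of `ρ₁` is joined to the first bottom node `b` of `ρ₂`.
If the result is a perfect matching, `{a, b}` is a whole block, so every other block meets the
nodes of `ρ₁` in all or nothing. Hence the `2j - 1` nodes of `ρ₁` other than `a` are a union of
two-element blocks, which is impossible by parity.
-/

theorem Setoid.dvd_card_of_saturated {α : Type*} {n : ℕ} (s : Setoid α)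
    (hs : ∀ x, {y | s.r x y}.ncard = n) (S : Finset α)
    (hS : ∀ x ∈ S, ∀ y, s.r x y → y ∈ S) : n ∣ #S := by
  classical
  rw [card_eq_sum_card_image (Quotient.mk s) S]
  refine Finset.dvd_sum fun q hq => ?_
  obtain ⟨x, hxS, rfl⟩ := Finset.mem_image.mp hq
  have hfiber : (({y ∈ S | Quotient.mk s y = Quotient.mk s x} : Finset α) : Set α)
      = {y | s.r x y} := by
    ext y
    simp only [coe_filter, Quotient.eq]
    exact ⟨fun h => s.symm' h.2, fun h => ⟨hS x hxS y h, s.symm' h⟩⟩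
  rw [← Set.ncard_coe_finset, hfiber, hs]

theorem joinTwo_r_self {X : Type*} (s : Setoid X) (a b : X) : (joinTwo s a b).r a b :=
  (le_sup_right : _ ≤ joinTwo s a b) (Relation.EqvGen.rel a b ⟨rfl, rfl⟩)

theorem joinTwo_r_iff {X : Type*} (s : Setoid X) (a b x y : X) :
    (joinTwo s a b).r x y ↔ s.r x y ∨ (s.r x a ∧ s.r b y) ∨ (s.r x b ∧ s.r a y) := by
  constructor
  · let R : Setoid X :=
      { r := fun x y => s.r x y ∨ (s.r x a ∧ s.r b y) ∨ (s.r x b ∧ s.r a y)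
        iseqv := by
          refine ⟨fun x => Or.inl (s.refl' x), ?_, ?_⟩
          · rintro x y (h | ⟨h1, h2⟩ | ⟨h1, h2⟩)
            · exact Or.inl (s.symm' h)
            · exact Or.inr (Or.inr ⟨s.symm' h2, s.symm' h1⟩)
            · exact Or.inr (Or.inl ⟨s.symm' h2, s.symm' h1⟩)
          · rintro x y z (h | ⟨h1, h2⟩ | ⟨h1, h2⟩) (g | ⟨g1, g2⟩ | ⟨g1, g2⟩)
            · exact Or.inl (s.trans' h g)
            · exact Or.inr (Or.inl ⟨s.trans' h g1, g2⟩)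
            · exact Or.inr (Or.inr ⟨s.trans' h g1, g2⟩)
            · exact Or.inr (Or.inl ⟨h1, s.trans' h2 g⟩)
            · exact Or.inl (s.trans' h1 (s.trans' (s.symm' (s.trans' h2 g1)) g2))
            · exact Or.inl (s.trans' h1 g2)
            · exact Or.inr (Or.inr ⟨h1, s.trans' h2 g⟩)
            · exact Or.inl (s.trans' h1 g2)
            · exact Or.inl (s.trans' h1 (s.trans' (s.symm' (s.trans' h2 g1)) g2)) }
    have hR : joinTwo s a b ≤ R := sup_le (fun u v huv => Or.inl huv) <| Setoid.eqvGen_le <| by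
      rintro u v ⟨rfl, rfl⟩
      exact Or.inr (Or.inl ⟨s.refl' u, s.refl' v⟩)
    exact fun h => hR h
  · have hs : s ≤ joinTwo s a b := le_sup_left
    have hab := joinTwo_r_self s a b
    rintro (h | ⟨h1, h2⟩ | ⟨h1, h2⟩)
    · exact hs h
    · exact (joinTwo s a b).trans' (hs h1) ((joinTwo s a b).trans' hab (hs h2))
    · exact (joinTwo s a b).trans' (hs h1)
        ((joinTwo s a b).trans' ((joinTwo s a b).symm' hab) (hs h2))

theorem joinTwo_r_of_not_r {X : Type*} {s : Setoid X} {a b x y : X}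
    (hxa : ¬ (joinTwo s a b).r x a) (h : (joinTwo s a b).r x y) : s.r x y := by
  have hs : s ≤ joinTwo s a b := le_sup_left
  rcases (joinTwo_r_iff s a b x y).mp h with h | ⟨hxa', -⟩ | ⟨hxb, -⟩
  · exact h
  · exact absurd (hs hxa') hxa
  · exact absurd
      ((joinTwo s a b).trans' (hs hxb) ((joinTwo s a b).symm' (joinTwo_r_self s a b))) hxa

theorem concatOn_r_val_lt {j m : ℕ} {s : DiagramOn j} {t : DiagramOn m}
    {x y : Fin (j + m) × Bool} (h : (concatOn s t).r x y) (hx : x.1.val < j) :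
    y.1.val < j := by
  obtain ⟨i, p⟩ := x
  obtain ⟨k, q⟩ := y
  replace h : (sumSetoid s t).r ((concatEquiv j m).symm (i, p)) ((concatEquiv j m).symm (k, q)) := h
  induction i using Fin.addCases <;> induction k using Fin.addCases <;> simp_all [concatEquiv]
  exact h

theorem card_filter_fst_val_lt (j m : ℕ) :
    #{x : Fin (j + m) × Bool | x.1.val < j} = 2 * j := by
  rw [show ({x : Fin (j + m) × Bool | x.1.val < j} : Finset _) =
      ({i : Fin (j + m) | i < j} : Finset _) ×ˢ (univ : Finset Bool) by ext; simp]
  simp [card_product, Fin.card_filter_val_lt, mul_comm]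

theorem not_isPerfectMatching_joinTwo_concatOn {j m : ℕ} (hj : j ≠ 0) (hm : m ≠ 0)
    (s : DiagramOn j) (t : DiagramOn m) :
    ¬ IsPerfectMatching
      (joinTwo (concatOn s t) (⟨j - 1, by omega⟩, false) (⟨j, by omega⟩, false)) := by
  set a : Fin (j + m) × Bool := (⟨j - 1, by omega⟩, false)
  set b : Fin (j + m) × Bool := (⟨j, by omega⟩, false)
  set π := joinTwo (concatOn s t) a b
  intro hpm
  have hab : a ≠ b := by simp [a, b, Prod.ext_iff, Fin.ext_iff]; omega
  have hblock : {y | π.r a y} = {a, b} :=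
    (Set.eq_of_subset_of_ncard_le
      (Set.pair_subset (π.refl' a) (joinTwo_r_self _ a b))
      (by rw [hpm a, Set.ncard_pair hab])).symm
  let S := ({x : Fin (j + m) × Bool | x.1.val < j} : Finset _).erase a
  have hS : ∀ x ∈ S, ∀ y, π.r x y → y ∈ S := by
    intro x hx y hxy
    simp only [S, mem_erase, mem_filter, mem_univ, true_and] at hx ⊢
    have hxa : ¬ π.r x a := by
      intro h
      have : x ∈ ({a, b} : Set _) := hblock ▸ π.symm' h
      rcases this with rfl | rfl
      · exact hx.1 rfl
      · simp [b] at hx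
    exact ⟨fun hya => hxa (hya ▸ hxy), concatOn_r_val_lt (joinTwo_r_of_not_r hxa hxy) hx.2⟩
  have hdvd := Setoid.dvd_card_of_saturated π hpm S hS
  rw [card_erase_of_mem (by simp [a]; omega), card_filter_fst_val_lt] at hdvd
  omega

theorem perfectMatching_bullet_primitive_general (π : Diagram)
    (hpm : IsPerfectMatching π.2) :
    ¬ ∃ ρ₁ ρ₂ : Diagram, ρ₁.1 ≠ 0 ∧ ρ₂.1 ≠ 0 ∧ π = ρ₁.bullet ρ₂ := by
  rintro ⟨ρ₁, ρ₂, h₁, h₂, rfl⟩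
  rw [Diagram.bullet, dif_neg h₁, dif_neg h₂] at hpm
  exact not_isPerfectMatching_joinTwo_concatOn h₁ h₂ ρ₁.2 ρ₂.2 hpm

/-- Every nonempty perfect matching diagram is `•`-primitive. -/
theorem perfectMatching_bullet_primitive (π : Diagram) (hπ : π.1 ≠ 0)
    (hpm : IsPerfectMatching π.2) :
    ¬ ∃ ρ₁ ρ₂ : Diagram, ρ₁.1 ≠ 0 ∧ ρ₂.1 ≠ 0 ∧ π = ρ₁.bullet ρ₂ :=
  perfectMatching_bullet_primitive_general π hpm
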